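/- arXiv:1212.0496 — 3 statements merged into one kernel-verified Lean document; each statement's English description precedes it below -/
import Mathlib

section
/- Given a Grothendieck fibration p : E → B of categories and a comonad (Q, δ, ε) on B, there exists a comonad (K, d, e) on E lifting Q, i.e., such that p ∘ K = Q ∘ p, p(e_A) = ε_{p A} and p(d_A) = δ_{p A} for all objects A of E. -/
/-!
Take `K A` to be the domain of a Cartesian lift `e_A : K A ⟶ A` of `ε_{p A}`. A morphism into
`K A` is determined by its image under `p` and its composite with `e_A`, and any pair compatible
with `ε` comes from such a morphism. So `K f` and `d_A` are defined as the fillers of `f ∘ e_A`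
over `Q (p f)` and of `𝟙` over `δ_{p A}`, and each comonad law for `(K, d, e)` splits into the
corresponding law for `Q` (its image under `p`) and a short computation with `e ∘ K f = f ∘ e`
and `e_{K A} ∘ d_A = 𝟙` (its composite with `e`). Only the lifts of the counit components are
used, so any choice of them (a `CounitLift`) yields a lifted comonad.
-/

namespace GrayPaper

open CategoryTheory

universe v u v' u'

variable {𝔼 : Type u} [Category.{v} 𝔼] {𝔹 : Type u'} [Category.{v'} 𝔹]

/-- A morphism `f : X ⟶ Y` in `𝔼` is `p`-Cartesian. -/
def PCart (p : 𝔼 ⥤ 𝔹) {X Y : 𝔼} (f : X ⟶ Y) : Prop :=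
  ∀ {Z : 𝔼} (k : Z ⟶ Y) (u : p.obj Z ⟶ p.obj X),
    u ≫ p.map f = p.map k → ∃! l : Z ⟶ X, p.map l = u ∧ l ≫ f = k

/-- A cleavage for `p`: a choice of Cartesian lift for every morphism of `𝔹` into the image
of an object of `𝔼`.  This presents `p` as a (cloven) Grothendieck fibration. -/
structure Cleavage (p : 𝔼 ⥤ 𝔹) where
  dom : ∀ (A : 𝔼) {X : 𝔹}, (X ⟶ p.obj A) → 𝔼
  domEq : ∀ (A : 𝔼) {X : 𝔹} (u : X ⟶ p.obj A), p.obj (dom A u) = X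
  homOf : ∀ (A : 𝔼) {X : 𝔹} (u : X ⟶ p.obj A), dom A u ⟶ A
  hom_over : ∀ (A : 𝔼) {X : 𝔹} (u : X ⟶ p.obj A),
    p.map (homOf A u) = eqToHom (domEq A u) ≫ u
  cart : ∀ (A : 𝔼) {X : 𝔹} (u : X ⟶ p.obj A), PCart p (homOf A u)

theorem PCart.hom_ext {p : 𝔼 ⥤ 𝔹} {X Y Z : 𝔼} {f : X ⟶ Y} (hf : PCart p f) {l₁ l₂ : Z ⟶ X}
    (hp : p.map l₁ = p.map l₂) (hcomp : l₁ ≫ f = l₂ ≫ f) : l₁ = l₂ := by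
  obtain ⟨l, -, hl⟩ := hf (l₂ ≫ f) (p.map l₂) (p.map_comp l₂ f).symm
  exact (hl l₁ ⟨hp, hcomp⟩).trans (hl l₂ ⟨rfl, rfl⟩).symm

structure CounitLift (p : 𝔼 ⥤ 𝔹) (Q : Comonad 𝔹) where
  obj : 𝔼 → 𝔼
  obj_eq : ∀ A, p.obj (obj A) = Q.obj (p.obj A)
  counit : ∀ A, obj A ⟶ A
  counit_over : ∀ A, p.map (counit A) = eqToHom (obj_eq A) ≫ Q.ε.app (p.obj A)
  counit_cart : ∀ A, PCart p (counit A)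

def Cleavage.counitLift {p : 𝔼 ⥤ 𝔹} (c : Cleavage p) (Q : Comonad 𝔹) : CounitLift p Q where
  obj A := c.dom A (Q.ε.app (p.obj A))
  obj_eq A := c.domEq A _
  counit A := c.homOf A _
  counit_over A := c.hom_over A _
  counit_cart A := c.cart A _

namespace CounitLift

variable {p : 𝔼 ⥤ 𝔹} {Q : Comonad 𝔹} (L : CounitLift p Q)

theorem hom_ext {Z A : 𝔼} {l₁ l₂ : Z ⟶ L.obj A} (hp : p.map l₁ = p.map l₂)
    (hcomp : l₁ ≫ L.counit A = l₂ ≫ L.counit A) : l₁ = l₂ :=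
  PCart.hom_ext (L.counit_cart A) hp hcomp

theorem exists_lift {Z A : 𝔼} (k : Z ⟶ A) (u : p.obj Z ⟶ Q.obj (p.obj A))
    (hu : u ≫ Q.ε.app (p.obj A) = p.map k) :
    ∃ l : Z ⟶ L.obj A, p.map l = u ≫ eqToHom (L.obj_eq A).symm ∧ l ≫ L.counit A = k :=
  (L.counit_cart A k _ (by simpa [L.counit_over] using hu)).exists

noncomputable def lift {Z A : 𝔼} (k : Z ⟶ A) (u : p.obj Z ⟶ Q.obj (p.obj A))
    (hu : u ≫ Q.ε.app (p.obj A) = p.map k) : Z ⟶ L.obj A :=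
  (L.exists_lift k u hu).choose

theorem map_lift {Z A : 𝔼} (k : Z ⟶ A) (u : p.obj Z ⟶ Q.obj (p.obj A))
    (hu : u ≫ Q.ε.app (p.obj A) = p.map k) :
    p.map (L.lift k u hu) = u ≫ eqToHom (L.obj_eq A).symm :=
  (L.exists_lift k u hu).choose_spec.1

theorem lift_counit {Z A : 𝔼} (k : Z ⟶ A) (u : p.obj Z ⟶ Q.obj (p.obj A))
    (hu : u ≫ Q.ε.app (p.obj A) = p.map k) : L.lift k u hu ≫ L.counit A = k :=
  (L.exists_lift k u hu).choose_spec.2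

noncomputable def functorMap {A B : 𝔼} (f : A ⟶ B) : L.obj A ⟶ L.obj B :=
  L.lift (L.counit A ≫ f) (eqToHom (L.obj_eq A) ≫ Q.map (p.map f))
    (by simp [L.counit_over, Functor.id_map])

theorem map_functorMap {A B : 𝔼} (f : A ⟶ B) :
    p.map (L.functorMap f) =
      eqToHom (L.obj_eq A) ≫ Q.map (p.map f) ≫ eqToHom (L.obj_eq B).symm := by
  simp [functorMap, map_lift]

theorem functorMap_counit {A B : 𝔼} (f : A ⟶ B) :
    L.functorMap f ≫ L.counit B = L.counit A ≫ f :=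
  L.lift_counit ..

theorem functorMap_counit_assoc {A B Z : 𝔼} (f : A ⟶ B) (g : B ⟶ Z) :
    L.functorMap f ≫ L.counit B ≫ g = L.counit A ≫ f ≫ g := by
  rw [← Category.assoc, functorMap_counit, Category.assoc]

noncomputable def functor : 𝔼 ⥤ 𝔼 where
  obj := L.obj
  map := L.functorMap
  map_id A := L.hom_ext (by simp [map_functorMap]) (by simp [functorMap_counit])
  map_comp f g := L.hom_ext (by simp [map_functorMap])
    (by simp [functorMap_counit, functorMap_counit_assoc])

noncomputable def comult (A : 𝔼) : L.obj A ⟶ L.obj (L.obj A) :=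
  L.lift (𝟙 _)
    (eqToHom (L.obj_eq A) ≫ Q.δ.app (p.obj A) ≫ Q.map (eqToHom (L.obj_eq A).symm))
    (by simp [Functor.id_map, Comonad.left_counit_assoc])

theorem map_comult (A : 𝔼) :
    p.map (L.comult A) = eqToHom (L.obj_eq A) ≫ Q.δ.app (p.obj A) ≫
      Q.map (eqToHom (L.obj_eq A).symm) ≫ eqToHom (L.obj_eq (L.obj A)).symm := by
  simp [comult, map_lift]

theorem comult_counit (A : 𝔼) : L.comult A ≫ L.counit (L.obj A) = 𝟙 _ :=
  L.lift_counit ..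

theorem comult_counit_assoc {A Z : 𝔼} (g : L.obj A ⟶ Z) :
    L.comult A ≫ L.counit (L.obj A) ≫ g = g := by
  rw [← Category.assoc, comult_counit, Category.id_comp]

theorem comult_naturality {A B : 𝔼} (f : A ⟶ B) :
    L.functorMap f ≫ L.comult B = L.comult A ≫ L.functorMap (L.functorMap f) := by
  refine L.hom_ext ?_ ?_
  · simp [map_functorMap, map_comult, Q.δ.naturality_assoc]
  · simp [comult_counit, comult_counit_assoc, functorMap_counit]

theorem comult_coassoc (A : 𝔼) :
    L.comult A ≫ L.functorMap (L.comult A) = L.comult A ≫ L.comult (L.obj A) := by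
  refine L.hom_ext ?_ ?_
  · simp [map_functorMap, map_comult, Comonad.coassoc_assoc]
  · simp [comult_counit, comult_counit_assoc, functorMap_counit]

theorem comult_functorMap_counit (A : 𝔼) : L.comult A ≫ L.functorMap (L.counit A) = 𝟙 _ := by
  refine L.hom_ext ?_ ?_
  · simp [map_functorMap, map_comult, counit_over, Comonad.right_counit_assoc]
  · simp [comult_counit_assoc, functorMap_counit]

noncomputable def comonad : Comonad 𝔼 where
  toFunctor := L.functor
  ε := { app := L.counit, naturality := fun _ _ f => L.functorMap_counit f }
  δ := { app := L.comult, naturality := fun _ _ f => L.comult_naturality f }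
  coassoc := L.comult_coassoc
  left_counit := L.comult_counit
  right_counit := L.comult_functorMap_counit

end CounitLift

theorem comonad_lift (p : 𝔼 ⥤ 𝔹) (_c : Cleavage p) (Q : Comonad 𝔹) :
    ∃ (K : Comonad 𝔼) (h : ∀ A : 𝔼, p.obj (K.obj A) = Q.obj (p.obj A)),
      (∀ A : 𝔼, p.map (K.ε.app A) = eqToHom (h A) ≫ Q.ε.app (p.obj A)) ∧
      (∀ A : 𝔼, p.map (K.δ.app A) =
        eqToHom (h A) ≫ Q.δ.app (p.obj A) ≫
          eqToHom (((h (K.obj A)).trans (congrArg Q.obj (h A))).symm)) := by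
  let L := _c.counitLift Q
  refine ⟨L.comonad, L.obj_eq, L.counit_over, fun A => ?_⟩
  exact (L.map_comult A).trans (by simp [eqToHom_map]; rfl)

end GrayPaper
end

section
/- Let (Q, δ, ε) be a comonad on a complete category C such that each ε is epimorphic. Then the inclusion R : C → C_Q of C into the co-Kleisli category preserves all limits: if (ℓ_i : L → D_i) is a limiting cone on a diagram D in C, then its image under R is a limiting cone in C_Q. -/
/-!
The inclusion `C ⥤ Cokleisli Q`, `f ↦ ε ≫ f`, is the right adjoint of the co-Kleisli
adjunction, so it preserves every limit that exists in `C`. The theorem is the universal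
property of the image of `t`, read off in terms of morphisms of `C`.
-/

namespace GrayPaper

open CategoryTheory CategoryTheory.Limits Cokleisli.Adjunction

universe v u

section

variable {C : Type u} [Category.{v} C] (Q : Comonad C) {J : Type v} [Category.{v} J]

def coKleisliCone {D : J ⥤ C} (X : C) (c : ∀ j : J, Q.obj X ⟶ D.obj j)
    (hc : ∀ {j j' : J} (φ : j ⟶ j'),
      Q.δ.app X ≫ Q.map (c j) ≫ (Q.ε.app (D.obj j) ≫ D.map φ) = c j') :
    Cone (D ⋙ toCokleisli Q) where
  pt := Cokleisli.mk Q X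
  π :=
    { app j := ⟨c j⟩
      naturality j j' φ := Cokleisli.hom_ext _ <|
        show Q.δ.app X ≫ Q.map (Q.ε.app X) ≫ c j' = _ by
          rw [← Category.assoc, Q.right_counit, Category.id_comp]
          exact (hc φ).symm }

noncomputable def isLimitToCokleisliMapCone {D : J ⥤ C} {t : Cone D} (ht : IsLimit t) :
    IsLimit ((toCokleisli Q).mapCone t) :=
  have := (Cokleisli.Adjunction.adj Q).rightAdjoint_preservesLimits
  isLimitOfPreserves _ ht

end

theorem cokleisli_inclusion_preserves_limits_general {C : Type u} [Category.{v} C]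
    (Q : Comonad C)
    {J : Type v} [Category.{v} J] (D : J ⥤ C) (t : Cone D) (ht : IsLimit t)
    (X : C) (c : ∀ j : J, Q.obj X ⟶ D.obj j)
    (hc : ∀ {j j' : J} (φ : j ⟶ j'),
      Q.δ.app X ≫ Q.map (c j) ≫ (Q.ε.app (D.obj j) ≫ D.map φ) = c j') :
    ∃! m : Q.obj X ⟶ t.pt,
      ∀ j : J, Q.δ.app X ≫ Q.map m ≫ (Q.ε.app t.pt ≫ t.π.app j) = c j := by
  obtain ⟨m, hm, hunique⟩ :=
    (isLimitToCokleisliMapCone Q ht).existsUnique (coKleisliCone Q X c hc)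
  exact ⟨m.of, fun j => congrArg Cokleisli.Hom.of (hm j),
    fun m' hm' =>
      congrArg Cokleisli.Hom.of (hunique ⟨m'⟩ fun j => Cokleisli.hom_ext _ (hm' j))⟩

theorem cokleisli_inclusion_preserves_limits {C : Type u} [Category.{v} C]
    [HasLimits C] (Q : Comonad C) (hepi : ∀ A : C, Epi (Q.ε.app A))
    {J : Type v} [Category.{v} J] (D : J ⥤ C) (t : Cone D) (ht : IsLimit t)
    (X : C) (c : ∀ j : J, Q.obj X ⟶ D.obj j)
    (hc : ∀ {j j' : J} (φ : j ⟶ j'),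
      Q.δ.app X ≫ Q.map (c j) ≫ (Q.ε.app (D.obj j) ≫ D.map φ) = c j') :
    ∃! m : Q.obj X ⟶ t.pt,
      ∀ j : J, Q.δ.app X ≫ Q.map m ≫ (Q.ε.app t.pt ≫ t.π.app j) = c j :=
  cokleisli_inclusion_preserves_limits_general Q D t ht X c hc

end GrayPaper
end

section
/- Let H be a 2-category, H→ its category of squares, and d₀, d₁ : H→ → H₁ the source and target functors, i : H₁ → H→ the identity-square functor. The pasting composition of squares restricts along the pullback H→ ×_{d₀,d₁} H→ to give an internal category object in Cat: the object of objects is H₁, the object of morphisms is H→, with source d₀, target d₁, identities i, and composition m given by pasting; in particular m is associative and unital and satisfies d₀ ∘ m = d₀ ∘ pr₂ and d₁ ∘ m = d₁ ∘ pr₁. -/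
/-!
Pasting of squares is built from whiskering and composing 2-cells. In a strict 2-category the
associators and unitors are identities (`eqToHom`), so associativity and unitality of pasting
reduce to the strict associativity and unitality of 1-cells, while functoriality of pasting in
vertical composition of squares is the interchange law `whisker_exchange`.
-/

namespace GrayPaper

open CategoryTheory CategoryTheory.Bicategory

universe w v u w₂ v₂ u₂ w₃ v₃ u₃

/-- An object of the path space `H→` of a (strict) 2-category `H`: a 1-cell of `H`. -/
structure PathOb (H : Type u) [Bicategory.{w, v} H] where
  src : H
  tgt : H
  hom : src ⟶ tgt

variable {H : Type u} [Bicategory.{w, v} H]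

/-- A morphism in the path space `H→`: a square consisting of two 1-cells and a 2-cell
filling it. -/
@[ext]
structure Square (f g : PathOb H) where
  left : f.src ⟶ g.src
  right : f.tgt ⟶ g.tgt
  fill : f.hom ≫ right ⟶ left ≫ g.hom

variable [Bicategory.Strict H]

/-- The identity square on a 1-cell. -/
def Square.id (f : PathOb H) : Square f f where
  left := 𝟙 f.src
  right := 𝟙 f.tgt
  fill := eqToHom (by simp)

/-- Vertical composition (pasting) of squares:
`(h₂, h₀, h₁) ∘ (g₂, g₀, g₁) = ((h₂ ◦ g₀) • (h₁ ◦ g₂), h₀ ∘ g₀, h₁ ∘ g₁)`. -/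
def Square.vcomp {f g h : PathOb H} (G : Square f g) (K : Square g h) : Square f h where
  left := G.left ≫ K.left
  right := G.right ≫ K.right
  fill :=
    eqToHom (by simp) ≫ (G.fill ▷ K.right) ≫ eqToHom (by simp) ≫
      (G.left ◁ K.fill) ≫ eqToHom (by simp)


/-- Horizontal composition (pasting along a common vertical boundary) of squares, i.e. the
composition `m` of the internal category `H→ ⇉ H₁`. -/
def Square.hcomp {x y z x' y' z' : H} {a : x ⟶ y} {b : y ⟶ z} {a' : x' ⟶ y'}
    {b' : y' ⟶ z'} (G : Square ⟨x, y, a⟩ ⟨x', y', a'⟩) (K : Square ⟨y, z, b⟩ ⟨y', z', b'⟩)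
    (hmid : K.left = G.right) : Square ⟨x, z, a ≫ b⟩ ⟨x', z', a' ≫ b'⟩ where
  left := G.left
  right := K.right
  fill :=
    eqToHom (by simp) ≫ (a ◁ K.fill) ≫ eqToHom (by rw [hmid]; simp) ≫
      (G.fill ▷ b') ≫ eqToHom (by simp)

namespace Strict

variable {p q r s : H}

lemma whiskerRight_whiskerRight {f g : p ⟶ q} (η : f ⟶ g) (u : q ⟶ r) (v : r ⟶ s) :
    η ▷ u ▷ v = eqToHom (by simp) ≫ η ▷ (u ≫ v) ≫ eqToHom (by simp) := by
  simp [whiskerRight_comp, Strict.associator_eqToIso]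

lemma whiskerLeft_whiskerLeft (u : p ⟶ q) (v : q ⟶ r) {f g : r ⟶ s} (η : f ⟶ g) :
    u ◁ v ◁ η = eqToHom (by simp) ≫ (u ≫ v) ◁ η ≫ eqToHom (by simp) := by
  simp [comp_whiskerLeft, Strict.associator_eqToIso]

lemma whiskerLeft_whiskerRight (u : p ⟶ q) {f g : q ⟶ r} (η : f ⟶ g) (v : r ⟶ s) :
    (u ◁ η) ▷ v = eqToHom (by simp) ≫ u ◁ η ▷ v ≫ eqToHom (by simp) := by
  simp [whisker_assoc, Strict.associator_eqToIso]

end Strict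

namespace Square

lemma mk_heq_mk {x y x' y' : H} {a b : x ⟶ y} {a' b' : x' ⟶ y'} {l l' : x ⟶ x'} {r r' : y ⟶ y'}
    (ha : a = b) (ha' : a' = b') (hl : l = l') (hr : r = r')
    {φ : a ≫ r ⟶ l ≫ a'} {ψ : b ≫ r' ⟶ l' ≫ b'}
    (hφ : φ = eqToHom (by rw [ha, hr]) ≫ ψ ≫ eqToHom (by rw [ha', hl])) :
    HEq (Square.mk (f := ⟨x, y, a⟩) (g := ⟨x', y', a'⟩) l r φ)
      (Square.mk (f := ⟨x, y, b⟩) (g := ⟨x', y', b'⟩) l' r' ψ) := by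
  subst ha ha' hl hr hφ
  simp

-- With the boundaries in this normal form `simp` can merge the `eqToHom` casts, which it cannot
-- do through the types in the definition of `hcomp`.
lemma mk_hcomp_mk {x y z x' y' z' : H} {a : x ⟶ y} {b : y ⟶ z} {a' : x' ⟶ y'} {b' : y' ⟶ z'}
    (l : x ⟶ x') (m : y ⟶ y') (r : z ⟶ z') (φ : a ≫ m ⟶ l ≫ a') (ψ : b ≫ r ⟶ m ≫ b') :
    (Square.mk (f := ⟨x, y, a⟩) (g := ⟨x', y', a'⟩) l m φ).hcomp
        (Square.mk (f := ⟨y, z, b⟩) (g := ⟨y', z', b'⟩) m r ψ) rfl =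
      Square.mk (f := ⟨x, z, a ≫ b⟩) (g := ⟨x', z', a' ≫ b'⟩) l r
        (eqToHom (by simp) ≫ a ◁ ψ ≫ eqToHom (by simp) ≫ φ ▷ b' ≫ eqToHom (by simp)) :=
  rfl

lemma id_hcomp_id {x y z : H} (a : x ⟶ y) (b : y ⟶ z) :
    (Square.id ⟨x, y, a⟩).hcomp (Square.id ⟨y, z, b⟩) rfl = Square.id ⟨x, z, a ≫ b⟩ := by
  ext <;> simp [hcomp, Square.id]

lemma hcomp_vcomp_hcomp {x y z x' y' z' x'' y'' z'' : H} {a : x ⟶ y} {b : y ⟶ z}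
    {a' : x' ⟶ y'} {b' : y' ⟶ z'} {a'' : x'' ⟶ y''} {b'' : y'' ⟶ z''}
    (G : Square ⟨x, y, a⟩ ⟨x', y', a'⟩) (K : Square ⟨y, z, b⟩ ⟨y', z', b'⟩)
    (G' : Square ⟨x', y', a'⟩ ⟨x'', y'', a''⟩) (K' : Square ⟨y', z', b'⟩ ⟨y'', z'', b''⟩)
    (h : K.left = G.right) (h' : K'.left = G'.right) :
    (G.hcomp K h).vcomp (G'.hcomp K' h') =
      (G.vcomp G').hcomp (K.vcomp K') (by simp only [vcomp, h, h']) := by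
  obtain ⟨gl, gr, φ⟩ := G
  obtain ⟨kl, kr, ψ⟩ := K
  obtain ⟨gl', gr', φ'⟩ := G'
  obtain ⟨kl', kr', ψ'⟩ := K'
  dsimp only at h h'
  subst h h'
  ext
  · rfl
  · rfl
  · simp only [hcomp, vcomp, heq_eq_eq, comp_whiskerRight, whiskerLeft_comp, whiskerLeft_eqToHom,
      eqToHom_whiskerRight, Strict.whiskerRight_whiskerRight, Strict.whiskerLeft_whiskerLeft,
      Category.assoc, eqToHom_trans, eqToHom_trans_assoc]
    simp only [whisker_exchange_assoc, Strict.whiskerLeft_whiskerRight, Category.assoc,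
      eqToHom_trans, eqToHom_trans_assoc, eqToHom_refl, Category.id_comp]

lemma hcomp_assoc {x y z w x' y' z' w' : H} {a : x ⟶ y} {b : y ⟶ z} {c : z ⟶ w}
    {a' : x' ⟶ y'} {b' : y' ⟶ z'} {c' : z' ⟶ w'}
    (G : Square ⟨x, y, a⟩ ⟨x', y', a'⟩) (K : Square ⟨y, z, b⟩ ⟨y', z', b'⟩)
    (L : Square ⟨z, w, c⟩ ⟨z', w', c'⟩) (h₁ : K.left = G.right) (h₂ : L.left = K.right) :
    HEq ((G.hcomp K h₁).hcomp L h₂) (G.hcomp (K.hcomp L h₂) h₁) := by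
  obtain ⟨gl, gr, φ⟩ := G
  obtain ⟨kl, kr, ψ⟩ := K
  obtain ⟨ll, lr, χ⟩ := L
  dsimp only at h₁ h₂
  subst h₁ h₂
  simp only [mk_hcomp_mk]
  refine mk_heq_mk (by simp) (by simp) rfl rfl ?_
  simp [Strict.associator_eqToIso]

variable {x y x' y' : H}

-- The image of a 1-cell `l` under the identity-square functor `i : H₁ → H→`.
def unit (l : x ⟶ x') : Square ⟨x, x, 𝟙 x⟩ ⟨x', x', 𝟙 x'⟩ := ⟨l, l, eqToHom (by simp)⟩

variable {a : x ⟶ y} {a' : x' ⟶ y'} (G : Square ⟨x, y, a⟩ ⟨x', y', a'⟩)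

lemma unit_hcomp : HEq ((unit G.left).hcomp G rfl) G := by
  obtain ⟨l, r, φ⟩ := G
  simp only [unit, mk_hcomp_mk]
  refine mk_heq_mk (by simp) (by simp) rfl rfl ?_
  simp [Strict.leftUnitor_eqToIso]

lemma hcomp_unit : HEq (G.hcomp (unit G.right) rfl) G := by
  obtain ⟨l, r, φ⟩ := G
  simp only [unit, mk_hcomp_mk]
  refine mk_heq_mk (by simp) (by simp) rfl rfl ?_
  simp [Strict.rightUnitor_eqToIso]

end Square

/-- source `d₀`, target `d₁`, identities `i` and the horizontal pasting `m`
make `H→ ⇉ H₁` an internal category in `Cat`: `m` has the correct faces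
(`d₀ ∘ m = d₀ ∘ pr₂`, `d₁ ∘ m = d₁ ∘ pr₁`), preserves identity squares, is functorial with
respect to vertical composition of squares (so that `m` is a functor on the pullback
`H→ ×_{d₀,d₁} H→`), is associative, and is unital with respect to `i`. -/
theorem path_internal_category (H : Type u) [Bicategory.{w, v} H] [Bicategory.Strict H] :
    -- faces: d₀ ∘ m = d₀ ∘ pr₂ and d₁ ∘ m = d₁ ∘ pr₁
    (∀ {x y z x' y' z' : H} {a : x ⟶ y} {b : y ⟶ z} {a' : x' ⟶ y'} {b' : y' ⟶ z'}
      (G : Square (H := H) ⟨x, y, a⟩ ⟨x', y', a'⟩) (K : Square ⟨y, z, b⟩ ⟨y', z', b'⟩)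
      (hmid : K.left = G.right),
      (G.hcomp K hmid).left = G.left ∧ (G.hcomp K hmid).right = K.right) ∧
    -- m preserves identity squares
    (∀ {x y z : H} (a : x ⟶ y) (b : y ⟶ z),
      (Square.id (H := H) ⟨x, y, a⟩).hcomp (Square.id ⟨y, z, b⟩) rfl =
        Square.id ⟨x, z, a ≫ b⟩) ∧
    -- m is functorial for vertical composition of squares (interchange)
    (∀ {x y z x' y' z' x'' y'' z'' : H} {a : x ⟶ y} {b : y ⟶ z} {a' : x' ⟶ y'}
      {b' : y' ⟶ z'} {a'' : x'' ⟶ y''} {b'' : y'' ⟶ z''}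
      (G : Square (H := H) ⟨x, y, a⟩ ⟨x', y', a'⟩) (K : Square ⟨y, z, b⟩ ⟨y', z', b'⟩)
      (G' : Square ⟨x', y', a'⟩ ⟨x'', y'', a''⟩) (K' : Square ⟨y', z', b'⟩ ⟨y'', z'', b''⟩)
      (h : K.left = G.right) (h' : K'.left = G'.right),
      (G.hcomp K h).vcomp (G'.hcomp K' h') =
        (G.vcomp G').hcomp (K.vcomp K')
          (show K.left ≫ K'.left = G.right ≫ G'.right by rw [h, h'])) ∧
    -- m is associative
    (∀ {x y z w x' y' z' w' : H} {a : x ⟶ y} {b : y ⟶ z} {cc : z ⟶ w} {a' : x' ⟶ y'}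
      {b' : y' ⟶ z'} {cc' : z' ⟶ w'}
      (G : Square (H := H) ⟨x, y, a⟩ ⟨x', y', a'⟩) (K : Square ⟨y, z, b⟩ ⟨y', z', b'⟩)
      (L : Square ⟨z, w, cc⟩ ⟨z', w', cc'⟩) (h₁ : K.left = G.right) (h₂ : L.left = K.right),
      HEq ((G.hcomp K h₁).hcomp L h₂) (G.hcomp (K.hcomp L h₂) h₁)) ∧
    -- m is unital with respect to the identity squares coming from `i : H₁ → H→`
    (∀ {x y x' y' : H} {a : x ⟶ y} {a' : x' ⟶ y'} (G : Square (H := H) ⟨x, y, a⟩ ⟨x', y', a'⟩),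
      HEq ((Square.mk G.left G.left (eqToHom (by simp)) :
              Square ⟨x, x, 𝟙 x⟩ ⟨x', x', 𝟙 x'⟩).hcomp G rfl) G ∧
      HEq (G.hcomp (Square.mk G.right G.right (eqToHom (by simp)) :
              Square ⟨y, y, 𝟙 y⟩ ⟨y', y', 𝟙 y'⟩) rfl) G) := by
  refine ⟨fun G K hmid => ⟨rfl, rfl⟩, Square.id_hcomp_id, Square.hcomp_vcomp_hcomp,
    Square.hcomp_assoc, fun G => ⟨Square.unit_hcomp G, Square.hcomp_unit G⟩⟩

end GrayPaper
end
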